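/- arXiv:1612.02134 — 2 statements merged into one kernel-verified Lean document; each statement's English description precedes it below -/
import Mathlib

section
/- Let p,q be positive coprime integers and s a positive integer. With λ_j = (3(1+s-2j)²p² + 2(2+3s-6j)pq + 3q²)/(48pq) for 1 ≤ j ≤ s, the identity h_{p-2,q-s} = (12/s)·Σ_{j=1}^s λ_j + 1 - s holds, where h_{m,n} = ((np - mq)² - (p-q)²)/(4pq). -/
/-!
With `t_j = 1 + s - 2j`, the numerator of `λ_j` is `3 p² t_j² + 6 p q t_j + 3 q² - 2 p q`.
The `t_j` are symmetric about `0`, so `∑ t_j = 0`, and `∑ t_j² = s (s² - 1) / 3`; hence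
`(12 / s) ∑ λ_j = ((s² - 1) p² - 2 p q + 3 q²) / (4 p q)`, which is `h_{p-2,q-s} + s - 1`.
-/

open Finset

section CenteredSums

variable {R : Type*} [CommRing R]

theorem sum_Icc_one_natCast_mul_two (n : ℕ) :
    (∑ j ∈ Icc 1 n, (j : R)) * 2 = n * (n + 1) := by
  induction n with
  | zero => simp
  | succ n ih =>
    rw [sum_Icc_succ_top (by omega), add_mul, ih]
    push_cast
    ring

theorem sum_Icc_one_natCast_sq_mul_six (n : ℕ) :
    (∑ j ∈ Icc 1 n, (j : R) ^ 2) * 6 = n * (n + 1) * (2 * n + 1) := by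
  induction n with
  | zero => simp
  | succ n ih =>
    rw [sum_Icc_succ_top (by omega), add_mul, ih]
    push_cast
    ring

theorem sum_Icc_one_centered (n : ℕ) :
    ∑ j ∈ Icc 1 n, (1 + (n : R) - 2 * j) = 0 := by
  have h := sum_Icc_one_natCast_mul_two (R := R) n
  rw [sum_sub_distrib, sum_const, Nat.card_Icc, ← mul_sum, nsmul_eq_mul,
    Nat.add_sub_cancel]
  linear_combination -h

theorem sum_Icc_one_centered_sq_mul_three (n : ℕ) :
    (∑ j ∈ Icc 1 n, (1 + (n : R) - 2 * j) ^ 2) * 3 = n * ((n : R) ^ 2 - 1) := by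
  have h₁ := sum_Icc_one_natCast_mul_two (R := R) n
  have h₂ := sum_Icc_one_natCast_sq_mul_six (R := R) n
  have expand : ∀ j : ℕ, (1 + (n : R) - 2 * j) ^ 2
      = (1 + (n : R)) ^ 2 - 4 * (1 + (n : R)) * j + 4 * (j : R) ^ 2 := fun j => by ring
  simp only [expand, sum_add_distrib, sum_sub_distrib, sum_const, Nat.card_Icc, ← mul_sum,
    nsmul_eq_mul, Nat.add_sub_cancel]
  linear_combination (-6 * (1 + (n : R))) * h₁ + 2 * h₂

end CenteredSums

theorem sum_Icc_one_leadingExponent_numerator {R : Type*} [CommRing R] (p q : R) (s : ℕ) :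
    ∑ j ∈ Icc 1 s, (3 * (1 + (s : R) - 2 * j) ^ 2 * p ^ 2
        + 2 * (2 + 3 * (s : R) - 6 * j) * p * q + 3 * q ^ 2)
      = s * ((s ^ 2 - 1) * p ^ 2 - 2 * p * q + 3 * q ^ 2) := by
  have hsq := sum_Icc_one_centered_sq_mul_three (R := R) s
  have hlin := sum_Icc_one_centered (R := R) s
  have expand : ∀ j : ℕ, 3 * (1 + (s : R) - 2 * j) ^ 2 * p ^ 2
      + 2 * (2 + 3 * (s : R) - 6 * j) * p * q + 3 * q ^ 2
      = p ^ 2 * (3 * (1 + (s : R) - 2 * j) ^ 2) + 6 * p * q * (1 + (s : R) - 2 * j)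
        + (3 * q ^ 2 - 2 * p * q) := fun j => by ring
  simp only [expand, sum_add_distrib, ← mul_sum, sum_const, Nat.card_Icc, nsmul_eq_mul,
    Nat.add_sub_cancel, hlin]
  linear_combination p ^ 2 * hsq

theorem monic_formula_case1_general
    (p q : ℤ) (hp : 0 < p) (hq : 0 < q) (s : ℕ) (hs : 0 < s) :
    ((((q : ℚ) - (s : ℚ)) * p - ((p : ℚ) - 2) * q)^2 - ((p : ℚ) - q)^2) / (4 * p * q)
      = (12 / (s : ℚ)) *
          (∑ j ∈ Finset.Icc 1 s,
            (3 * (1 + (s : ℚ) - 2 * (j : ℚ))^2 * p^2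
              + 2 * (2 + 3 * (s : ℚ) - 6 * (j : ℚ)) * p * q + 3 * q^2) / (48 * p * q))
        + 1 - s := by
  have hp' : (p : ℚ) ≠ 0 := by exact_mod_cast hp.ne'
  have hq' : (q : ℚ) ≠ 0 := by exact_mod_cast hq.ne'
  have hs' : (s : ℚ) ≠ 0 := by exact_mod_cast hs.ne'
  rw [← sum_div, sum_Icc_one_leadingExponent_numerator]
  field_simp
  ring

theorem monic_formula_case1
    (p q : ℤ) (hp : 0 < p) (hq : 0 < q) (hpq : IsCoprime p q) (s : ℕ) (hs : 0 < s) :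
    ((((q : ℚ) - (s : ℚ)) * p - ((p : ℚ) - 2) * q)^2 - ((p : ℚ) - q)^2) / (4 * p * q)
      = (12 / (s : ℚ)) *
          (∑ j ∈ Finset.Icc 1 s,
            (3 * (1 + (s : ℚ) - 2 * (j : ℚ))^2 * p^2
              + 2 * (2 + 3 * (s : ℚ) - 6 * (j : ℚ)) * p * q + 3 * q^2) / (48 * p * q))
        + 1 - s :=
  monic_formula_case1_general p q hp hq s hs
end

section
/- Let r > 3 be a prime, q a positive integer divisible by r, n an odd integer with n ≤ q - 3, and set n₁ = (n+1)/2, n₂ = n₁ + 1, n₃ = n₁ + 2. Then r cannot divide all three of 12n₁² - n² + 1, 12n₂² - n² + 1, and 12n₃² - n² + 1. -/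
/-! The second difference of `m ↦ 12 m² + c` is the constant `24`, so a common divisor of three
consecutive values divides `24 = 2³ · 3`, which no prime `r > 3` does. -/

theorem dvd_two_mul_of_dvd_three_consecutive {R : Type*} [CommRing R] {r a c m : R}
    (h₀ : r ∣ a * m ^ 2 + c) (h₁ : r ∣ a * (m + 1) ^ 2 + c) (h₂ : r ∣ a * (m + 2) ^ 2 + c) :
    r ∣ 2 * a := by
  have hsecond : 2 * a = (a * (m + 2) ^ 2 + c) - 2 * (a * (m + 1) ^ 2 + c) + (a * m ^ 2 + c) := by
    ring
  rw [hsecond]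
  exact (h₂.sub (h₁.mul_left 2)).add h₀

theorem Prime.le_three_of_dvd_twentyFour {r : ℤ} (hr : Prime r) (h : r ∣ 24) : r ≤ 3 := by
  rw [show (24 : ℤ) = 2 ^ 3 * 3 by norm_num] at h
  rcases hr.dvd_or_dvd h with h2 | h3
  · linarith [Int.le_of_dvd two_pos (hr.dvd_of_dvd_pow h2)]
  · exact Int.le_of_dvd three_pos h3

theorem qdiv_key_general
    (r : ℤ) (hr : Prime r) (hr3 : 3 < r)
    (n : ℤ) :
    ¬ (r ∣ (12 * ((n + 1) / 2)^2 - n^2 + 1)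
        ∧ r ∣ (12 * ((n + 1) / 2 + 1)^2 - n^2 + 1)
        ∧ r ∣ (12 * ((n + 1) / 2 + 2)^2 - n^2 + 1)) := by
  rintro ⟨h₀, h₁, h₂⟩
  simp only [sub_add_eq_add_sub, add_sub_assoc] at h₀ h₁ h₂
  have h24 : r ∣ 2 * 12 := dvd_two_mul_of_dvd_three_consecutive h₀ h₁ h₂
  exact hr3.not_ge (hr.le_three_of_dvd_twentyFour h24)

theorem qdiv_key
    (r : ℤ) (hr : Prime r) (hr3 : 3 < r)
    (q : ℤ) (hq : 0 < q) (hrq : r ∣ q)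
    (n : ℤ) (hnodd : Odd n) (hn : n ≤ q - 3) :
    ¬ (r ∣ (12 * ((n + 1) / 2)^2 - n^2 + 1)
        ∧ r ∣ (12 * ((n + 1) / 2 + 1)^2 - n^2 + 1)
        ∧ r ∣ (12 * ((n + 1) / 2 + 2)^2 - n^2 + 1)) :=
  qdiv_key_general r hr hr3 n
end
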